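/- Every real number can be written as the sum of two Liouville numbers; that is, for every x ∈ ℝ there exist y, z ∈ 𝔏 with x = y + z, where 𝔏 = ⋂_{τ>2} {t ∈ ℝ : |t − p/q| < q^{−τ} for infinitely many pairs (p,q) ∈ ℤ × ℕ} is the set of Liouville numbers. -/
import Mathlib


open MeasureTheory
open scoped ENNReal

/-- The set of Liouville numbers, defined as
`⋂_{τ>2} {x ∈ ℝ : |x − p/q| < q^{−τ} for infinitely many (p,q) ∈ ℤ × ℕ}`. -/
noncomputable def LiouvilleSet : Set ℝ :=
  ⋂ τ ∈ Set.Ioi (2:ℝ),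
    {x : ℝ | {pq : ℤ × ℕ | 0 < pq.2 ∧
      |x - (pq.1 : ℝ) / (pq.2 : ℝ)| < (pq.2 : ℝ) ^ (-τ)}.Infinite}

lemma liouville_mem_liouvilleSet {x : ℝ} (hx : Liouville x) : x ∈ LiouvilleSet := by
  rw [LiouvilleSet, Set.mem_iInter₂]
  intro τ hτ
  simp only [Set.mem_setOf_eq]
  set S : Set (ℤ × ℕ) := {pq : ℤ × ℕ | 0 < pq.2 ∧
      |x - (pq.1 : ℝ) / (pq.2 : ℝ)| < (pq.2 : ℝ) ^ (-τ)} with hS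
  -- For each n ≥ τ, the Liouville approximation at n gives a member of S.
  have key : ∀ n : ℕ, (τ ≤ n) → ∃ pq ∈ S, 0 < |x - (pq.1 : ℝ) / (pq.2 : ℝ)| ∧
      |x - (pq.1 : ℝ) / (pq.2 : ℝ)| < (1/2) ^ n := by
    intro n hn
    obtain ⟨a, b, hb, hne, hlt⟩ := hx n
    have hb0 : (0:ℤ) < b := by omega
    refine ⟨(a, b.toNat), ?_, ?_, ?_⟩
    · constructor
      · simpa using by omega
      · have hcast : ((b.toNat : ℕ) : ℝ) = (b : ℝ) := by
          exact_mod_cast congrArg Int.cast (Int.toNat_of_nonneg hb0.le)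
        rw [hcast]
        refine hlt.trans_le ?_
        rw [Real.rpow_neg (by positivity), one_div, inv_le_inv₀ (by positivity) (by positivity)]
        calc ((b:ℝ)) ^ τ ≤ (b:ℝ) ^ (n : ℝ) := by
              apply Real.rpow_le_rpow_of_exponent_le
              · exact_mod_cast hb.le
              · exact hn
          _ = (b:ℝ) ^ n := by rw [Real.rpow_natCast]
    · have hcast : ((b.toNat : ℕ) : ℝ) = (b : ℝ) := by
        exact_mod_cast congrArg Int.cast (Int.toNat_of_nonneg hb0.le)
      simp only [hcast]
      exact abs_pos.2 (sub_ne_zero.2 hne)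
    · have hcast : ((b.toNat : ℕ) : ℝ) = (b : ℝ) := by
        exact_mod_cast congrArg Int.cast (Int.toNat_of_nonneg hb0.le)
      simp only [hcast]
      refine hlt.trans_le ?_
      rw [one_div, div_pow, one_pow, one_div]
      apply inv_anti₀ (by positivity)
      apply pow_le_pow_left₀ (by norm_num)
      exact_mod_cast hb
  -- x is irrational
  have hirr := hx.irrational
  by_contra hfin
  rw [Set.not_infinite] at hfin
  obtain ⟨N, hN⟩ := exists_nat_ge τ
  have hSne : S.Nonempty := by
    obtain ⟨pq, hpq, -, -⟩ := key N hN
    exact ⟨pq, hpq⟩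
  obtain ⟨pq₀, hpq₀, hmin⟩ := Set.exists_min_image S
    (fun pq => |x - (pq.1 : ℝ) / (pq.2 : ℝ)|) hfin hSne
  have hε : 0 < |x - (pq₀.1 : ℝ) / (pq₀.2 : ℝ)| := by
    rw [abs_pos, sub_ne_zero]
    intro h
    exact hirr ⟨(pq₀.1 : ℚ) / (pq₀.2 : ℚ), by push_cast; exact h.symm⟩
  obtain ⟨n, hn⟩ := exists_pow_lt_of_lt_one hε (by norm_num : (1:ℝ)/2 < 1)
  obtain ⟨pq, hpq, -, hlt⟩ := key (max n N) (hN.trans (by exact_mod_cast le_max_right n N))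
  have h1 : ((1:ℝ)/2) ^ (max n N) ≤ (1/2) ^ n :=
    pow_le_pow_of_le_one (by norm_num) (by norm_num) (le_max_left n N)
  exact absurd (hmin pq hpq) (not_le.2 (hlt.trans_le (h1.trans hn.le)))

lemma isGδ_preimage {X Y : Type*} [TopologicalSpace X] [TopologicalSpace Y]
    {f : X → Y} (hf : Continuous f) {s : Set Y} (hs : IsGδ s) : IsGδ (f ⁻¹' s) := by
  obtain ⟨T, hTo, hTc, rfl⟩ := hs
  rw [Set.sInter_eq_biInter, Set.preimage_iInter₂]
  exact IsGδ.biInter_of_isOpen hTc fun t ht => (hTo t ht).preimage hf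

theorem stmt_13 : ∀ x : ℝ, ∃ y ∈ LiouvilleSet, ∃ z ∈ LiouvilleSet, x = y + z := by
  intro x
  have hGδ : IsGδ { t : ℝ | Liouville t } := IsGδ.setOf_liouville
  have hd : Dense { t : ℝ | Liouville t } := dense_liouville
  set f : ℝ → ℝ := fun y => x - y with hf
  have hfo : IsOpenMap f := (Homeomorph.subLeft x).isOpenMap
  have hGδ' : IsGδ (f ⁻¹' { t : ℝ | Liouville t }) :=
    isGδ_preimage (Homeomorph.subLeft x).continuous hGδ
  have hd' : Dense (f ⁻¹' { t : ℝ | Liouville t }) := hd.preimage hfo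
  have hne : ({ t : ℝ | Liouville t } ∩ f ⁻¹' { t : ℝ | Liouville t }).Nonempty :=
    (hd.inter_of_Gδ hGδ hGδ' hd').nonempty
  obtain ⟨y, hy1, hy2⟩ := hne
  exact ⟨y, liouville_mem_liouvilleSet hy1, x - y, liouville_mem_liouvilleSet hy2, by ring⟩
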